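/- Let a ≥ 3 be an integer and let λ > 1 be the real root of λ² − aλ + 1 = 0. Let ℤ[λ]⋊_λℤ be the group of 2×2 real matrices [[λ^k, x],[0, 1]] with k ∈ ℤ and x ∈ ℤ[λ] (the subring of ℝ generated by λ), noting that every x ∈ ℤ[λ] can be written uniquely as x = x₁ + λ·x_λ with x₁, x_λ ∈ ℤ. Let A_λ := [[0, −1],[1, a]] ∈ SL(2,ℤ). Then the map φ : ℤ[λ]⋊_λℤ → SA(2,ℤ) defined by φ([[λ^k, x],[0,1]]) = (A_λ^k, (x₁, x_λ)ᵀ) is an injective group homomorphism. -/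

import Mathlib

/-
The evaluation `ε(v) = v₀ + λ v₁ : ℤ² → ℤ[λ]` is additive and, because `λ² = aλ − 1`, turns
`A_λ` into multiplication by `λ`; hence `ε(A_λ^k v) = λ^k ε(v)`, which is exactly what makes
`(k, v) ↦ (A_λ^k, v)` multiplicative. The matrix `[[λ^k, ε(v)],[0,1]]` determines `(k, v)`, so
that `φ` is well defined, because `ε` is injective, i.e. `λ` is irrational: a rational root of the
monic `X² − aX + 1` would be an integer `m` with `m (a − m) = 1`, so `m = ±1`, contradicting
`λ > 1`. Reading `λ^k = ε(A_λ^k e₀)` off `A_λ^k` shows that `k ↦ A_λ^k` is injective as well.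
-/

open scoped Matrix

abbrev SL2Z := Matrix.SpecialLinearGroup (Fin 2) ℤ

/-- The special affine group `SA(2, ℤ) = ℤ² ⋊ SL(2, ℤ)`, as pairs `(A, a)`. -/
@[ext]
structure SA2 : Type where
  lin : SL2Z
  trans : Fin 2 → ℤ

namespace SA2

instance : Mul SA2 :=
  ⟨fun p q => ⟨p.lin * q.lin, (p.lin : Matrix (Fin 2) (Fin 2) ℤ) *ᵥ q.trans + p.trans⟩⟩

instance : One SA2 := ⟨⟨1, 0⟩⟩

instance : Inv SA2 :=
  ⟨fun p => ⟨p.lin⁻¹, -(((p.lin⁻¹ : SL2Z) : Matrix (Fin 2) (Fin 2) ℤ) *ᵥ p.trans)⟩⟩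

@[simp] lemma mul_lin (p q : SA2) : (p * q).lin = p.lin * q.lin := rfl
@[simp] lemma mul_trans (p q : SA2) :
    (p * q).trans = (p.lin : Matrix (Fin 2) (Fin 2) ℤ) *ᵥ q.trans + p.trans := rfl
@[simp] lemma one_lin : (1 : SA2).lin = 1 := rfl
@[simp] lemma one_trans : (1 : SA2).trans = 0 := rfl
@[simp] lemma inv_lin (p : SA2) : (p⁻¹).lin = p.lin⁻¹ := rfl
@[simp] lemma inv_trans (p : SA2) :
    (p⁻¹).trans = -(((p.lin⁻¹ : SL2Z) : Matrix (Fin 2) (Fin 2) ℤ) *ᵥ p.trans) := rfl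

instance : Group SA2 where
  mul_assoc a b c := by
    ext i
    · rw [mul_lin, mul_lin, mul_lin, mul_lin, mul_assoc]
    · simp only [mul_trans, mul_lin, Matrix.SpecialLinearGroup.coe_mul, Matrix.mulVec_add,
        Matrix.mulVec_mulVec, add_assoc]
  one_mul a := by
    ext i
    · simp
    · simp
  mul_one a := by
    ext i
    · simp
    · simp [Matrix.mulVec_zero]
  inv_mul_cancel a := by
    ext i
    · simp
    · simp only [mul_trans, inv_trans, inv_lin, Matrix.SpecialLinearGroup.coe_inv, one_trans,
        add_neg_cancel]

end SA2

/-- The underlying set of the group `ℤ[λ] ⋊_λ ℤ`, as `2×2` real matrices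
`[[λ^k, x],[0,1]]` with `k ∈ ℤ` and `x = x₁ + λ·x_λ ∈ ℤ[λ]`. -/
def ZlamSemidirect (lam : ℝ) : Set (Matrix (Fin 2) (Fin 2) ℝ) :=
  {M | ∃ k x₁ xl : ℤ, M = !![lam ^ k, (x₁ : ℝ) + lam * (xl : ℝ); (0 : ℝ), (1 : ℝ)]}

/-- The matrix `A_λ = [[0,-1],[1,a]] ∈ SL(2,ℤ)`. -/
def Alam (a : ℤ) : SL2Z :=
  ⟨!![0, -1; 1, a], by norm_num [Matrix.det_fin_two_of]⟩

section

variable {a : ℤ} {lam : ℝ}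

theorem irrational_of_sq_sub_mul_add_one_eq_zero (hlam : 1 < lam)
    (hroot : lam ^ 2 - (a : ℝ) * lam + 1 = 0) : Irrational lam := by
  rintro ⟨q, rfl⟩
  have hq : q ^ 2 - a * q + 1 = 0 := by exact_mod_cast hroot
  have hint : IsIntegral ℤ q := by
    refine ⟨Polynomial.X ^ 2 - Polynomial.C a * Polynomial.X + 1, ?_, ?_⟩
    · monicity!
    · rw [← Polynomial.aeval_def]
      simpa using hq
  obtain ⟨m, rfl⟩ := IsIntegrallyClosed.isIntegral_iff.mp hint
  rw [algebraMap_int_eq, eq_intCast] at hq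
  have hm : m * (a - m) = 1 := by
    exact_mod_cast (by linear_combination -hq : (m : ℚ) * (a - m) = 1)
  have : (1 : ℝ) < m := by simpa using hlam
  rcases Int.eq_one_or_neg_one_of_mul_eq_one hm with rfl | rfl <;> norm_num at this

def lamEval (lam : ℝ) : (Fin 2 → ℤ) →+ ℝ where
  toFun v := v 0 + lam * v 1
  map_zero' := by simp
  map_add' u v := by simp only [Pi.add_apply, Int.cast_add]; ring

theorem lamEval_apply (v : Fin 2 → ℤ) : lamEval lam v = v 0 + lam * v 1 := rfl

theorem lamEval_injective (hlam : 1 < lam) (hroot : lam ^ 2 - (a : ℝ) * lam + 1 = 0) :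
    Function.Injective (lamEval lam) := by
  rw [injective_iff_map_eq_zero]
  intro v hv
  have hv1 : v 1 = 0 := by
    by_contra h
    exact (((irrational_of_sq_sub_mul_add_one_eq_zero hlam hroot).mul_intCast h).intCast_add
      (v 0)).ne_zero hv
  have hv0 : v 0 = 0 := by simpa [lamEval_apply, hv1] using hv
  ext i; fin_cases i <;> assumption

theorem lamEval_Alam_mulVec (hroot : lam ^ 2 - (a : ℝ) * lam + 1 = 0) (v : Fin 2 → ℤ) :
    lamEval lam ((Alam a : Matrix (Fin 2) (Fin 2) ℤ) *ᵥ v) = lam * lamEval lam v := by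
  simp only [Alam, lamEval_apply, Matrix.cons_mulVec, dotProduct, Fin.sum_univ_two,
    Matrix.cons_val_zero, Matrix.cons_val_one, Matrix.cons_val_fin_one, Matrix.empty_mulVec]
  push_cast
  linear_combination (-(v 1 : ℝ)) * hroot

theorem lamEval_Alam_inv_mulVec (hlam : lam ≠ 0) (hroot : lam ^ 2 - (a : ℝ) * lam + 1 = 0)
    (v : Fin 2 → ℤ) :
    lamEval lam ((((Alam a)⁻¹ : SL2Z) : Matrix (Fin 2) (Fin 2) ℤ) *ᵥ v)
      = lam⁻¹ * lamEval lam v := by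
  rw [eq_inv_mul_iff_mul_eq₀ hlam, ← lamEval_Alam_mulVec hroot, Matrix.mulVec_mulVec,
    ← Matrix.SpecialLinearGroup.coe_mul, mul_inv_cancel, Matrix.SpecialLinearGroup.coe_one,
    Matrix.one_mulVec]

theorem lamEval_Alam_zpow_mulVec (hlam : lam ≠ 0) (hroot : lam ^ 2 - (a : ℝ) * lam + 1 = 0)
    (k : ℤ) (v : Fin 2 → ℤ) :
    lamEval lam (((Alam a ^ k : SL2Z) : Matrix (Fin 2) (Fin 2) ℤ) *ᵥ v)
      = lam ^ k * lamEval lam v := by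
  induction k using Int.induction_on generalizing v with
  | zero => simp
  | succ n ih =>
    rw [zpow_add_one, Matrix.SpecialLinearGroup.coe_mul, ← Matrix.mulVec_mulVec, ih,
      lamEval_Alam_mulVec hroot, zpow_add_one₀ hlam, mul_assoc]
  | pred n ih =>
    rw [zpow_sub_one, Matrix.SpecialLinearGroup.coe_mul, ← Matrix.mulVec_mulVec, ih,
      lamEval_Alam_inv_mulVec hlam hroot, zpow_sub_one₀ hlam, mul_assoc]

theorem lam_zpow_eq_lamEval (hlam : lam ≠ 0) (hroot : lam ^ 2 - (a : ℝ) * lam + 1 = 0) (k : ℤ) :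
    lam ^ k = lamEval lam (((Alam a ^ k : SL2Z) : Matrix (Fin 2) (Fin 2) ℤ) *ᵥ Pi.single 0 1) := by
  rw [lamEval_Alam_zpow_mulVec hlam hroot]
  simp [lamEval_apply]

theorem Alam_zpow_injective (hlam : 1 < lam) (hroot : lam ^ 2 - (a : ℝ) * lam + 1 = 0) :
    Function.Injective (fun k : ℤ => Alam a ^ k) := by
  intro k m h
  have hlam0 : lam ≠ 0 := by positivity
  apply zpow_right_injective₀ (by positivity) hlam.ne'
  simp only [lam_zpow_eq_lamEval hlam0 hroot, h]

noncomputable def lamMatrix (lam : ℝ) (p : ℤ × (Fin 2 → ℤ)) : Matrix (Fin 2) (Fin 2) ℝ :=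
  !![lam ^ p.1, lamEval lam p.2; 0, 1]

theorem lamMatrix_injective (hlam : 1 < lam) (hroot : lam ^ 2 - (a : ℝ) * lam + 1 = 0) :
    Function.Injective (lamMatrix lam) := by
  rintro ⟨k, v⟩ ⟨m, w⟩ h
  have hk : lam ^ k = lam ^ m := by simpa [lamMatrix] using congrFun (congrFun h 0) 0
  have hv : lamEval lam v = lamEval lam w := by simpa [lamMatrix] using congrFun (congrFun h 0) 1
  exact Prod.ext (zpow_right_injective₀ (by positivity) hlam.ne' hk)
    (lamEval_injective hlam hroot hv)

theorem lamMatrix_mul (hlam : lam ≠ 0) (hroot : lam ^ 2 - (a : ℝ) * lam + 1 = 0)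
    (k m : ℤ) (v w : Fin 2 → ℤ) :
    lamMatrix lam (k, v) * lamMatrix lam (m, w)
      = lamMatrix lam (k + m, ((Alam a ^ k : SL2Z) : Matrix (Fin 2) (Fin 2) ℤ) *ᵥ w + v) := by
  simp only [lamMatrix, Matrix.mul_fin_two, map_add, lamEval_Alam_zpow_mulVec hlam hroot,
    zpow_add₀ hlam]
  simp

theorem ZlamSemidirect_eq_range : ZlamSemidirect lam = Set.range (lamMatrix lam) := by
  ext M
  constructor
  · rintro ⟨k, x₁, xl, rfl⟩
    exact ⟨(k, ![x₁, xl]), rfl⟩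
  · rintro ⟨⟨k, v⟩, rfl⟩
    exact ⟨k, v 0, v 1, rfl⟩

end

theorem Zlam_semidirect_embeds_in_SA2_general
    (a : ℤ) (lam : ℝ) (hlam : 1 < lam)
    (hroot : lam ^ 2 - (a : ℝ) * lam + 1 = 0) :
    ∃ φ : Matrix (Fin 2) (Fin 2) ℝ → SA2,
      (∀ k x₁ xl : ℤ,
        φ !![lam ^ k, (x₁ : ℝ) + lam * (xl : ℝ); (0 : ℝ), (1 : ℝ)]
          = SA2.mk (Alam a ^ k) ![x₁, xl]) ∧
      (∀ M ∈ ZlamSemidirect lam, ∀ N ∈ ZlamSemidirect lam, φ (M * N) = φ M * φ N) ∧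
      (∀ M ∈ ZlamSemidirect lam, ∀ N ∈ ZlamSemidirect lam, φ M = φ N → M = N) := by
  have hlam0 : lam ≠ 0 := by positivity
  set φ : Matrix (Fin 2) (Fin 2) ℝ → SA2 := fun M =>
    let p := Function.invFun (lamMatrix lam) M
    ⟨Alam a ^ p.1, p.2⟩
  have hφ (k : ℤ) (v : Fin 2 → ℤ) : φ (lamMatrix lam (k, v)) = ⟨Alam a ^ k, v⟩ := by
    simp only [φ, Function.leftInverse_invFun (lamMatrix_injective hlam hroot) (k, v)]
  refine ⟨φ, fun k x₁ xl => hφ k ![x₁, xl], ?_, ?_⟩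
  · simp only [ZlamSemidirect_eq_range, Set.forall_mem_range, Prod.forall]
    intro k v m w
    rw [lamMatrix_mul hlam0 hroot, hφ, hφ, hφ]
    exact SA2.ext (zpow_add _ _ _) rfl
  · simp only [ZlamSemidirect_eq_range, Set.forall_mem_range, Prod.forall]
    intro k v m w h
    rw [hφ, hφ, SA2.mk.injEq] at h
    rw [Alam_zpow_injective hlam hroot h.1, h.2]

/-- For an integer `a ≥ 3` and the root `λ > 1` of `λ² − aλ + 1 = 0`,
the map `φ : ℤ[λ]⋊_λℤ → SA(2,ℤ)`, `[[λ^k, x₁ + λ·x_λ],[0,1]] ↦ (A_λ^k, (x₁, x_λ)ᵀ)`,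
is a well-defined injective group homomorphism. -/
theorem Zlam_semidirect_embeds_in_SA2
    (a : ℤ) (ha : 3 ≤ a) (lam : ℝ) (hlam : 1 < lam)
    (hroot : lam ^ 2 - (a : ℝ) * lam + 1 = 0) :
    ∃ φ : Matrix (Fin 2) (Fin 2) ℝ → SA2,
      (∀ k x₁ xl : ℤ,
        φ !![lam ^ k, (x₁ : ℝ) + lam * (xl : ℝ); (0 : ℝ), (1 : ℝ)]
          = SA2.mk (Alam a ^ k) ![x₁, xl]) ∧
      (∀ M ∈ ZlamSemidirect lam, ∀ N ∈ ZlamSemidirect lam, φ (M * N) = φ M * φ N) ∧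
      (∀ M ∈ ZlamSemidirect lam, ∀ N ∈ ZlamSemidirect lam, φ M = φ N → M = N) :=
  Zlam_semidirect_embeds_in_SA2_general a lam hlam hroot
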